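/- Specialize U_c¹ at p = i·q (so p² = −q²): the 2×2 matrices over F given by X₁ = diag(i·q, −i·q), X₂ = diag(−i·q, i·q), T₂ = diag(i·q, i·q), and T₁ with rows [(q²−1)/(2q), (1+q²)²/(4q²)], [1, (q²−1)/(2q)] satisfy the B₂ affine Hecke relations with p = i·q and remain irreducible: every F-subspace of F² invariant under all four matrices is 0 or F². -/
import Mathlib


set_option maxHeartbeats 2000000
set_option synthInstance.maxHeartbeats 400000

noncomputable section

/-- `F = ℂ(q)`, the field of rational functions in one indeterminate over `ℂ`. -/
abbrev F : Type := RatFunc ℂ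

/-- The indeterminate `q ∈ F`. -/
def qF : F := RatFunc.X

/-- The imaginary unit `i`, viewed as a constant in `F`. -/
def ii : F := RatFunc.C Complex.I

/-- A quadruple of `n × n` matrices over `F` satisfies the `B₂` affine Hecke relations
(with parameters `p`, `q`). -/
def HeckeRelF {n : ℕ} (p q : F) (T₁ T₂ X₁ X₂ : Matrix (Fin n) (Fin n) F) : Prop :=
  IsUnit X₁ ∧ IsUnit X₂ ∧
  (T₁ - q • 1) * (T₁ + q⁻¹ • 1) = 0 ∧
  (T₂ - p • 1) * (T₂ + p⁻¹ • 1) = 0 ∧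
  T₁ * T₂ * T₁ * T₂ = T₂ * T₁ * T₂ * T₁ ∧
  T₁ * X₂ * T₁ = X₁ ∧
  T₂ * X₂⁻¹ * T₂ = X₂ ∧
  T₂ * X₁ = X₁ * T₂ ∧
  X₁ * X₂ = X₂ * X₁

/-- Irreducibility: the only `F`-subspaces of `Fⁿ` invariant under all four matrices
are `0` and `Fⁿ`. -/
def IsIrredRepF {n : ℕ} (T₁ T₂ X₁ X₂ : Matrix (Fin n) (Fin n) F) : Prop :=
  ∀ U : Submodule F (Fin n → F),
    (∀ v ∈ U, T₁.mulVec v ∈ U) → (∀ v ∈ U, T₂.mulVec v ∈ U) →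
    (∀ v ∈ U, X₁.mulVec v ∈ U) → (∀ v ∈ U, X₂.mulVec v ∈ U) →
    U = ⊥ ∨ U = ⊤

/-- `X₁` of `U_c¹` specialized at `p = i·q`. -/
def X1c1i : Matrix (Fin 2) (Fin 2) F := !![ii * qF, 0; 0, -(ii * qF)]

/-- `X₂` of `U_c¹` specialized at `p = i·q`. -/
def X2c1i : Matrix (Fin 2) (Fin 2) F := !![-(ii * qF), 0; 0, ii * qF]

/-- `T₁` of `U_c¹` specialized at `p = i·q`. -/
def T1c1i : Matrix (Fin 2) (Fin 2) F :=
  !![(qF ^ 2 - 1) / (2 * qF), (1 + qF ^ 2) ^ 2 / (4 * qF ^ 2); 1, (qF ^ 2 - 1) / (2 * qF)]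

/-- `T₂` of `U_c¹` specialized at `p = i·q`. -/
def T2c1i : Matrix (Fin 2) (Fin 2) F := !![ii * qF, 0; 0, ii * qF]


lemma hq : qF ≠ 0 := RatFunc.X_ne_zero

lemma hi : ii ≠ 0 := by
  simpa [ii] using (map_ne_zero (RatFunc.C (K := ℂ))).mpr Complex.I_ne_zero

lemma hI2 : ii * ii = -1 := by
  rw [ii, ← map_mul, Complex.I_mul_I, map_neg, map_one]

lemma h1q : (1 : F) + qF ^ 2 ≠ 0 := by
  have h : (1 : F) + qF ^ 2 = algebraMap (Polynomial ℂ) F (1 + Polynomial.X ^ 2) := by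
    simp [qF, RatFunc.algebraMap_X, map_add, map_pow]
  rw [h]
  apply RatFunc.algebraMap_ne_zero
  intro h'
  have := congrArg (Polynomial.coeff · 0) h'
  simp at this

lemma hiq : ii * qF ≠ 0 := mul_ne_zero hi hq

lemma h2 : (2 : F) ≠ 0 := by
  rw [show (2 : F) = RatFunc.C 2 from (map_ofNat _ 2).symm]
  exact (map_ne_zero _).mpr two_ne_zero

lemma h4 : (4 : F) ≠ 0 := by
  rw [show (4 : F) = RatFunc.C 4 from (map_ofNat _ 4).symm]
  exact (map_ne_zero _).mpr (by norm_num)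

lemma hX2inv : X2c1i⁻¹ = !![(-(ii * qF))⁻¹, 0; 0, (ii * qF)⁻¹] := by
  apply Matrix.inv_eq_right_inv
  ext i j
  fin_cases i <;> fin_cases j <;>
    simp [X2c1i, Matrix.mul_apply, Fin.sum_univ_two, Matrix.one_apply] <;>
    field_simp [hi, hq] <;> try ring

lemma rel1 : (T1c1i - qF • 1) * (T1c1i + qF⁻¹ • 1) = 0 := by
  ext i j
  fin_cases i <;> fin_cases j <;>
    simp [T1c1i, Matrix.mul_apply, Fin.sum_univ_two, Matrix.one_apply] <;>
    field_simp [hi, hq, h2, h4] <;> ring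

lemma rel2 : (T2c1i - (ii * qF) • 1) * (T2c1i + (ii * qF)⁻¹ • 1) = 0 := by
  have h : T2c1i - (ii * qF) • (1 : Matrix (Fin 2) (Fin 2) F) = 0 := by
    ext i j
    fin_cases i <;> fin_cases j <;>
      simp [T2c1i, Matrix.one_apply]
  rw [h, zero_mul]

lemma rel3 : T1c1i * T2c1i * T1c1i * T2c1i = T2c1i * T1c1i * T2c1i * T1c1i := by
  ext i j
  fin_cases i <;> fin_cases j <;>
    simp [T1c1i, T2c1i, Matrix.mul_apply, Fin.sum_univ_two] <;> ring

lemma rel4 : T1c1i * X2c1i * T1c1i = X1c1i := by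
  ext i j
  fin_cases i <;> fin_cases j <;>
    simp [T1c1i, X2c1i, X1c1i, Matrix.mul_apply, Fin.sum_univ_two] <;>
    field_simp [hi, hq, h2, h4] <;> ring

lemma key5a : ii * qF * (-(ii * qF))⁻¹ * (ii * qF) = -(ii * qF) := by
  linear_combination (-(ii * qF)) * mul_inv_cancel₀ (neg_ne_zero.mpr hiq)

lemma key5b : ii * qF * (ii * qF)⁻¹ * (ii * qF) = ii * qF := by
  rw [mul_inv_cancel₀ hiq, one_mul]

lemma rel5 : T2c1i * X2c1i⁻¹ * T2c1i = X2c1i := by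
  rw [hX2inv]
  ext i j
  fin_cases i <;> fin_cases j <;>
    simp [T2c1i, X2c1i, Matrix.mul_apply, Fin.sum_univ_two] <;>
    first
      | rfl
      | linear_combination key5a
      | linear_combination key5b

lemma rel6 : T2c1i * X1c1i = X1c1i * T2c1i := by
  ext i j
  fin_cases i <;> fin_cases j <;>
    simp [T2c1i, X1c1i, Matrix.mul_apply, Fin.sum_univ_two] <;> try ring

lemma rel7 : X1c1i * X2c1i = X2c1i * X1c1i := by
  ext i j
  fin_cases i <;> fin_cases j <;>
    simp [X1c1i, X2c1i, Matrix.mul_apply, Fin.sum_univ_two] <;> try ring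

lemma hX1unit : IsUnit X1c1i := by
  rw [Matrix.isUnit_iff_isUnit_det, isUnit_iff_ne_zero]
  simp [X1c1i, Matrix.det_fin_two_of, hi, hq]

lemma hX2unit : IsUnit X2c1i := by
  rw [Matrix.isUnit_iff_isUnit_det, isUnit_iff_ne_zero]
  simp [X2c1i, Matrix.det_fin_two_of, hi, hq]

lemma top_of (U : Submodule F (Fin 2 → F)) (h0 : ![(1:F),0] ∈ U) (h1 : ![(0:F),1] ∈ U) :
    U = ⊤ := by
  rw [Submodule.eq_top_iff']
  intro x
  have hx : x = x 0 • ![(1:F),0] + x 1 • ![(0:F),1] := by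
    funext i; fin_cases i <;> simp
  rw [hx]
  exact U.add_mem (U.smul_mem _ h0) (U.smul_mem _ h1)

lemma irred : IsIrredRepF T1c1i T2c1i X1c1i X2c1i := by
  intro U hT1 _hT2 hX1 _hX2
  rcases eq_or_ne U ⊥ with h | h
  · exact Or.inl h
  right
  obtain ⟨v, hvU, hv0⟩ := (Submodule.ne_bot_iff U).mp h
  have step01 : ![(1:F),0] ∈ U → ![(0:F),1] ∈ U := by
    intro h0
    have key : T1c1i.mulVec ![(1:F),0] - ((qF ^ 2 - 1) / (2 * qF)) • ![(1:F),0]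
        = ![(0:F),1] := by
      funext i
      fin_cases i <;>
        simp [T1c1i, Matrix.mulVec, dotProduct, Fin.sum_univ_two]
    exact key ▸ U.sub_mem (hT1 _ h0) (U.smul_mem _ h0)
  have hb : ((1 + qF ^ 2) ^ 2 / (4 * qF ^ 2)) ≠ 0 :=
    div_ne_zero (pow_ne_zero _ h1q) (mul_ne_zero h4 (pow_ne_zero _ hq))
  have step10 : ![(0:F),1] ∈ U → ![(1:F),0] ∈ U := by
    intro h1
    have key : ((1 + qF ^ 2) ^ 2 / (4 * qF ^ 2))⁻¹ •
        (T1c1i.mulVec ![(0:F),1] - ((qF ^ 2 - 1) / (2 * qF)) • ![(0:F),1])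
        = ![(1:F),0] := by
      funext i
      fin_cases i <;>
        simp [T1c1i, Matrix.mulVec, dotProduct, Fin.sum_univ_two,
          Matrix.vecHead, Matrix.vecTail, Function.comp, Pi.smul_apply, smul_eq_mul] <;>
        field_simp [h1q, hq, h4, h2] <;> ring
    exact key ▸ U.smul_mem _ (U.sub_mem (hT1 _ h1) (U.smul_mem _ h1))
  by_cases hv00 : v 0 = 0
  · have hv1 : v 1 ≠ 0 := by
      intro h1
      exact hv0 (by funext i; fin_cases i <;> simp [hv00, h1])
    have he1 : ![(0:F),1] ∈ U := by
      have key : (v 1)⁻¹ • v = ![(0:F),1] := by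
        funext i; fin_cases i <;> simp [hv00, inv_mul_cancel₀ hv1]
      exact key ▸ U.smul_mem _ hvU
    exact top_of U (step10 he1) he1
  · have he0 : ![(1:F),0] ∈ U := by
      have key : (2 * (ii * qF) * v 0)⁻¹ • (X1c1i.mulVec v + (ii * qF) • v)
          = ![(1:F),0] := by
        funext i
        fin_cases i <;>
          simp [X1c1i, Matrix.mulVec, dotProduct, Fin.sum_univ_two,
            Matrix.vecHead, Matrix.vecTail, Function.comp, Pi.smul_apply, smul_eq_mul] <;>
          field_simp [h2, hi, hq, hv00] <;> ring
      exact key ▸ U.smul_mem _ (U.add_mem (hX1 _ hvU) (U.smul_mem _ hvU))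
    exact top_of U he0 (step01 he0)

/-- `U_c¹` at `p = i·q` satisfies the `B₂` affine Hecke relations and remains irreducible. -/
theorem Uc1_specialized_irreducible :
    HeckeRelF (ii * qF) qF T1c1i T2c1i X1c1i X2c1i ∧
    IsIrredRepF T1c1i T2c1i X1c1i X2c1i := by
  exact ⟨⟨hX1unit, hX2unit, rel1, rel2, rel3, rel4, rel5, rel6, rel7⟩, irred⟩
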